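/- arXiv:2203.05783 — 2 statements merged into one kernel-verified Lean document; each statement's English description precedes it below -/
import Mathlib

section
/- Let K be a field of characteristic zero, let s ≥ 1 and r_1,…,r_s ≥ 1 be integers, and let R = K[x, y_{1,1},…,y_{1,r_1},…,y_{s,1},…,y_{s,r_s}]. Let D = ∂_x + Σ_{i=1}^{s} Σ_{j=1}^{r_i} (a_i(x)·y_{i,j} + b_{i,j}(x))·∂_{i,j} be the K-derivation of R with a_i, b_{i,j} ∈ K[x] and a_i ≠ a_l for i ≠ l. If D is a simple derivation, then the variable y_{1,1} does not belong to Im D = D(R); that is, there is no f ∈ R with D(f) = y_{1,1}. -/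
/-!
Simplicity of `D` forces every Darboux element (`D u = c * u`) to be a constant: the principal
ideal it generates is `D`-stable, so `u` is zero or a unit. Applied to `yᵥ - p(x)` with
`p' = κ p + bᵥ`, this shows that no `aᵥ` is constant. The partial derivatives satisfy
`[∂ᵥ, D] = aᵥ(x) ∂ᵥ`, so if `D f = y_{v₀}`, then `∂ᵥ f` (for `v ≠ v₀`) and `∂²_{v₀} f` are
Darboux elements with the nonzero cofactors `-aᵥ` and `-2 a_{v₀}`, hence vanish. Thus
`∂_{v₀} f = q(x)` with `q' + a_{v₀} q = 1`, which is impossible for degree reasons.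
-/

open MvPolynomial

/-- A `K`-subspace `M` of `R` is a Mathieu–Zhao space if for all `a, b ∈ R` such that
`a ^ m ∈ M` for all `m ≥ 1`, there exists `N` such that `b * a ^ m ∈ M` for all `m ≥ N`. -/
def IsMathieuZhao (K : Type*) {R : Type*} [Field K] [CommRing R] [Algebra K R]
    (M : Submodule K R) : Prop :=
  ∀ a b : R, (∀ m : ℕ, 1 ≤ m → a ^ m ∈ M) →
    ∃ N : ℕ, ∀ m : ℕ, N ≤ m → b * a ^ m ∈ M

/-- A `K`-derivation `D` of `R` is simple if the only ideals `I` of `R` with `D(I) ⊆ I`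
are `0` and `R`. -/
def Derivation.IsSimple {K R : Type*} [CommRing K] [CommRing R] [Algebra K R]
    (D : Derivation K R R) : Prop :=
  ∀ I : Ideal R, (∀ a ∈ I, D a ∈ I) → I = ⊥ ∨ I = ⊤

namespace Polynomial

variable {K : Type*} [Field K] [CharZero K]

theorem exists_derivative_eq (b : K[X]) : ∃ p, derivative p = b := by
  induction b using Polynomial.induction_on' with
  | add b₁ b₂ h₁ h₂ =>
    obtain ⟨p₁, rfl⟩ := h₁
    obtain ⟨p₂, rfl⟩ := h₂
    exact ⟨p₁ + p₂, derivative_add⟩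
  | monomial n c =>
    refine ⟨monomial (n + 1) (c / (n + 1)), ?_⟩
    rw [derivative_monomial, Nat.add_sub_cancel, Nat.cast_add_one,
      div_mul_cancel₀ _ (Nat.cast_add_one_ne_zero n)]

theorem exists_derivative_eq_C_mul_add (κ : K) (b : K[X]) :
    ∃ p, derivative p = C κ * p + b := by
  rcases eq_or_ne κ 0 with rfl | hκ
  · simpa using exists_derivative_eq b
  -- `p = -∑ κ⁻¹ ^ (k + 1) b⁽ᵏ⁾`, a finite sum since `derivative` is nilpotent on `b`
  set g : ℕ → K[X] := fun k => C (κ⁻¹ ^ k) * derivative^[k] b with hg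
  refine ⟨-∑ k ∈ Finset.range (b.natDegree + 1), C κ⁻¹ * g k, ?_⟩
  have hderiv (k : ℕ) : derivative (C κ⁻¹ * g k) = g (k + 1) := by
    simp only [hg, ← mul_assoc, ← C_mul, derivative_C_mul, pow_succ',
      Function.iterate_succ_apply']
  have hmul (k : ℕ) : C κ * (C κ⁻¹ * g k) = g k := by
    rw [← mul_assoc, ← C_mul, mul_inv_cancel₀ hκ, C_1, one_mul]
  have hlast : g (b.natDegree + 1) = 0 := by
    simp [hg, iterate_derivative_eq_zero (Nat.lt_succ_self _)]
  have hfirst : g 0 = b := by simp [hg]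
  clear_value g
  have htel := Finset.sum_range_sub' g (b.natDegree + 1)
  rw [Finset.sum_sub_distrib, hfirst, hlast] at htel
  simp only [map_neg, map_sum, hderiv, mul_neg, Finset.mul_sum, hmul]
  linear_combination htel

theorem derivative_add_mul_ne_one {R : Type*} [CommRing R] [IsDomain R] {a : R[X]}
    (ha : 0 < a.natDegree) (q : R[X]) : derivative q + a * q ≠ 1 := by
  intro h
  have hq : q ≠ 0 := by
    rintro rfl
    simp at h
  have ha0 : a ≠ 0 := ne_zero_of_natDegree_gt ha
  have hlt : (derivative q).natDegree < (a * q).natDegree := by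
    rw [natDegree_mul ha0 hq]
    have := natDegree_derivative_le q
    omega
  have hdeg := congrArg natDegree h
  rw [natDegree_add_eq_right_of_natDegree_lt hlt, natDegree_one, natDegree_mul ha0 hq] at hdeg
  omega

end Polynomial

namespace Derivation.IsSimple

theorem eq_zero_or_isUnit_of_apply_eq_mul {K R : Type*} [CommRing K]
    [CommRing R] [Algebra K R] {D : Derivation K R R} (hD : D.IsSimple) {u c : R}
    (h : D u = c * u) : u = 0 ∨ IsUnit u := by
  have hstable : ∀ z ∈ Ideal.span {u}, D z ∈ Ideal.span {u} := by
    intro z hz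
    obtain ⟨t, rfl⟩ := Ideal.mem_span_singleton'.mp hz
    rw [Ideal.mem_span_singleton']
    exact ⟨D t + t * c, by rw [Derivation.leibniz, h, smul_eq_mul, smul_eq_mul]; ring⟩
  exact (hD _ hstable).imp Ideal.span_singleton_eq_bot.mp Ideal.span_singleton_eq_top.mp

variable {K σ : Type*} [CommRing K]

theorem exists_eq_C_of_apply_eq_mul [IsReduced K]
    {D : Derivation K (MvPolynomial σ K) (MvPolynomial σ K)} (hD : D.IsSimple)
    {u c : MvPolynomial σ K} (h : D u = c * u) : ∃ κ, u = C κ := by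
  rcases hD.eq_zero_or_isUnit_of_apply_eq_mul h with rfl | hu
  · exact ⟨0, C_0.symm⟩
  · obtain ⟨κ, -, rfl⟩ := isUnit_iff_eq_C_of_isReduced.mp hu
    exact ⟨κ, rfl⟩

theorem eq_zero_of_apply_eq_mul [IsDomain K]
    {D : Derivation K (MvPolynomial σ K) (MvPolynomial σ K)} (hD : D.IsSimple)
    {u c : MvPolynomial σ K} (hc : c ≠ 0) (h : D u = c * u) : u = 0 := by
  obtain ⟨κ, rfl⟩ := hD.exists_eq_C_of_apply_eq_mul h
  rw [derivation_C] at h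
  exact (mul_eq_zero.mp h.symm).resolve_left hc

end Derivation.IsSimple

namespace MvPolynomial

variable {R ι : Type*}

theorem pderiv_comm [CommRing R] (i j : ι) (φ : MvPolynomial ι R) :
    pderiv i (pderiv j φ) = pderiv j (pderiv i φ) := by
  classical
  have h : ⁅(pderiv i : Derivation R (MvPolynomial ι R) (MvPolynomial ι R)), pderiv j⁆ = 0 :=
    derivation_ext fun k => by
      rw [Derivation.commutator_apply, pderiv_X, pderiv_X]
      simp [Pi.single_apply, apply_ite]
  have hφ := congrArg (· φ) h
  simp only [Derivation.commutator_apply, Derivation.zero_apply] at hφ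
  exact sub_eq_zero.mp hφ

theorem notMem_vars_of_pderiv_eq_zero [CommRing R] [IsDomain R] [CharZero R] {i : ι}
    {φ : MvPolynomial ι R} (h : pderiv i φ = 0) : i ∉ φ.vars := by
  classical
  intro hi
  obtain ⟨d, hd, hdi⟩ := (mem_vars_iff_mem_support i).mp hi
  have hd' : d - Finsupp.single i 1 + Finsupp.single i 1 = d := by
    refine tsub_add_cancel_of_le (Finsupp.single_le_iff.mpr ?_)
    exact Nat.one_le_iff_ne_zero.mpr (Finsupp.mem_support_iff.mp hdi)
  have hcoeff := coeff_pderiv (i := i) φ (d - Finsupp.single i 1)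
  rw [h, coeff_zero, hd'] at hcoeff
  exact mul_ne_zero (mem_support_iff.mp hd) (Nat.cast_add_one_ne_zero _) hcoeff.symm

theorem pderiv_some_aeval_X_none [CommSemiring R] (v : ι) (p : Polynomial R) :
    pderiv (some v) (Polynomial.aeval (X none : MvPolynomial (Option ι) R) p) = 0 := by
  rw [Derivation.comp_aeval_eq, pderiv_X_of_ne (Option.some_ne_none v).symm, smul_zero]

theorem aeval_X_none_injective [CommSemiring R] :
    Function.Injective (Polynomial.aeval (R := R) (X none : MvPolynomial (Option ι) R)) := by
  refine Function.LeftInverse.injective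
    (g := aeval fun w : Option ι => w.elim Polynomial.X 0) fun p => ?_
  rw [← Polynomial.aeval_algHom_apply, aeval_X, Option.elim_none, Polynomial.aeval_X_left_apply]

theorem exists_aeval_X_none_eq_of_pderiv_eq_zero [CommRing R] [IsDomain R] [CharZero R]
    {φ : MvPolynomial (Option ι) R} (h : ∀ v, pderiv (some v) φ = 0) :
    ∃ q : Polynomial R, Polynomial.aeval (X none) q = φ := by
  have hvars : ↑φ.vars ⊆ ({none} : Set (Option ι)) := by
    rintro (_ | v) hv
    · rfl
    · exact absurd hv (notMem_vars_of_pderiv_eq_zero (h v))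
  have hφ := (mem_supported (R := R)).mpr hvars
  rwa [supported_eq_adjoin_X, Set.image_singleton, Algebra.adjoin_singleton_eq_range_aeval]
    at hφ

end MvPolynomial

namespace Shamsuddin

-- `X none` is `x` and `X (some v)` is `y_v`; the paper's double index `(i, j)` is flattened to `v`.
variable {K ι : Type*} [Field K]
  {D : Derivation K (MvPolynomial (Option ι) K) (MvPolynomial (Option ι) K)}
  {α β : ι → Polynomial K} (hDx : D (X none) = 1)
  (hDy : ∀ v, D (X (some v)) =
    Polynomial.aeval (X none) (α v) * X (some v) + Polynomial.aeval (X none) (β v))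
include hDx

theorem apply_aeval_X_none (p : Polynomial K) :
    D (Polynomial.aeval (X none) p) = Polynomial.aeval (X none) (Polynomial.derivative p) := by
  rw [Derivation.comp_aeval_eq, hDx, smul_eq_mul, mul_one]

include hDy

theorem pderiv_some_apply (v : ι) (φ : MvPolynomial (Option ι) K) :
    pderiv (some v) (D φ) =
      D (pderiv (some v) φ) + Polynomial.aeval (X none) (α v) * pderiv (some v) φ := by
  classical
  have h : ⁅(pderiv (some v) : Derivation K _ _), D⁆ =
      Polynomial.aeval (X none) (α v) • pderiv (some v) :=
    derivation_ext fun w => by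
      rw [Derivation.commutator_apply, Derivation.smul_apply, smul_eq_mul]
      rcases w with _ | u
      · simp [hDx]
      · by_cases huv : u = v <;> simp [hDy, huv]
  have hφ := congrArg (· φ) h
  simp only [Derivation.commutator_apply, Derivation.smul_apply, smul_eq_mul] at hφ
  linear_combination hφ

theorem natDegree_pos_of_isSimple [CharZero K] (hD : D.IsSimple) (v : ι) :
    0 < (α v).natDegree := by
  by_contra! h
  obtain ⟨κ, hκ⟩ := Polynomial.natDegree_eq_zero.mp (Nat.le_zero.mp h)
  obtain ⟨p, hp⟩ := Polynomial.exists_derivative_eq_C_mul_add κ (β v)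
  set u : MvPolynomial (Option ι) K := X (some v) - Polynomial.aeval (X none) p
  have hDu : D u = C κ * u := by
    rw [map_sub, hDy, apply_aeval_X_none hDx, hp, ← hκ]
    simp only [map_add, map_mul, Polynomial.aeval_C, algebraMap_eq]
    ring
  obtain ⟨c, hc⟩ := hD.exists_eq_C_of_apply_eq_mul hDu
  have hpd := congrArg (pderiv (some v)) hc
  rw [map_sub, pderiv_X_self, pderiv_some_aeval_X_none, sub_zero, pderiv_C] at hpd
  exact one_ne_zero hpd

theorem not_exists_apply_eq_X_some [CharZero K] (hD : D.IsSimple) (v₀ : ι) :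
    ¬ ∃ f, D f = X (some v₀) := by
  rintro ⟨f, hf⟩
  have hdeg := natDegree_pos_of_isSimple hDx hDy hD
  have hα (v : ι) : Polynomial.aeval (X none : MvPolynomial (Option ι) K) (α v) ≠ 0 :=
    fun h => Polynomial.ne_zero_of_natDegree_gt (hdeg v)
      (aeval_X_none_injective (h.trans (map_zero _).symm))
  have hf_ne (v : ι) (hv : v ≠ v₀) : pderiv (some v) f = 0 := by
    refine hD.eq_zero_of_apply_eq_mul (neg_ne_zero.mpr (hα v)) ?_
    have h := pderiv_some_apply hDx hDy v f
    rw [hf, pderiv_X_of_ne (Option.some_injective _ |>.ne hv.symm)] at h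
    linear_combination -h
  set g := pderiv (some v₀) f
  have hDg : D g = 1 - Polynomial.aeval (X none) (α v₀) * g := by
    have h := pderiv_some_apply hDx hDy v₀ f
    rw [hf, pderiv_X_self] at h
    linear_combination -h
  have hg : pderiv (some v₀) g = 0 := by
    refine hD.eq_zero_of_apply_eq_mul (mul_ne_zero (neg_ne_zero.mpr two_ne_zero) (hα v₀)) ?_
    have h := pderiv_some_apply hDx hDy v₀ g
    rw [hDg, map_sub, pderiv_one, pderiv_mul, pderiv_some_aeval_X_none] at h
    linear_combination -h
  obtain ⟨q, hq⟩ := exists_aeval_X_none_eq_of_pderiv_eq_zero (φ := g) fun v => by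
    obtain rfl | hv := eq_or_ne v v₀
    · exact hg
    · rw [pderiv_comm, hf_ne v hv, map_zero]
  refine Polynomial.derivative_add_mul_ne_one (hdeg v₀) q
    (aeval_X_none_injective (R := K) (ι := ι) ?_)
  rw [← hq, apply_aeval_X_none hDx] at hDg
  rw [map_add, map_mul, map_one]
  linear_combination hDg

end Shamsuddin

theorem statement14_general (K : Type*) [Field K] [CharZero K]
    (s : ℕ) (hs : 1 ≤ s) (r : Fin s → ℕ) (hr : ∀ i, 1 ≤ r i)
    (a : Fin s → Polynomial K) (b : (i : Fin s) → Fin (r i) → Polynomial K)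
    (D : Derivation K (MvPolynomial (Option (Σ i : Fin s, Fin (r i))) K)
      (MvPolynomial (Option (Σ i : Fin s, Fin (r i))) K))
    (hDx : D (X none) = 1)
    (hDy : ∀ (i : Fin s) (j : Fin (r i)),
      D (X (some ⟨i, j⟩)) =
        Polynomial.aeval (X none) (a i) * X (some ⟨i, j⟩)
          + Polynomial.aeval (X none) (b i j))
    (hD : Derivation.IsSimple D) :
    ¬ ∃ f : MvPolynomial (Option (Σ i : Fin s, Fin (r i))) K,
        D f = X (some ⟨⟨0, hs⟩, ⟨0, hr ⟨0, hs⟩⟩⟩) :=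
  Shamsuddin.not_exists_apply_eq_X_some (α := fun v : Σ i : Fin s, Fin (r i) => a v.1)
    (β := fun v => b v.1 v.2) hDx
    (fun ⟨i, j⟩ => hDy i j) hD _

/-- If the Shamsuddin derivation `D = ∂ₓ + Σᵢⱼ (aᵢ(x) yᵢⱼ + bᵢⱼ(x)) ∂ᵢⱼ`
(with `aᵢ ≠ aₗ` for `i ≠ l`) is simple, then `y₁,₁ ∉ Im D`. -/
theorem statement14 (K : Type*) [Field K] [CharZero K]
    (s : ℕ) (hs : 1 ≤ s) (r : Fin s → ℕ) (hr : ∀ i, 1 ≤ r i)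
    (a : Fin s → Polynomial K) (b : (i : Fin s) → Fin (r i) → Polynomial K)
    (ha : ∀ i l : Fin s, i ≠ l → a i ≠ a l)
    (D : Derivation K (MvPolynomial (Option (Σ i : Fin s, Fin (r i))) K)
      (MvPolynomial (Option (Σ i : Fin s, Fin (r i))) K))
    (hDx : D (X none) = 1)
    (hDy : ∀ (i : Fin s) (j : Fin (r i)),
      D (X (some ⟨i, j⟩)) =
        Polynomial.aeval (X none) (a i) * X (some ⟨i, j⟩)
          + Polynomial.aeval (X none) (b i j))
    (hD : Derivation.IsSimple D) :
    ¬ ∃ f : MvPolynomial (Option (Σ i : Fin s, Fin (r i))) K,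
        D f = X (some ⟨⟨0, hs⟩, ⟨0, hr ⟨0, hs⟩⟩⟩) :=
  statement14_general K s hs r hr a b D hDx hDy hD
end

section
/- Let K be a field of characteristic zero and let D = ∂_{x_1} + (a_2·x_2 + b_2)·∂_{x_2} + (a_3·x_3 + b_3)·∂_{x_3} be the K-derivation of K[x_1,x_2,x_3] with a_2, b_2 ∈ K[x_1], a_3, b_3 ∈ K[x_1,x_2], a_3 ≠ 0, and deg_{x_2} a_3 = 0 (so a_3 ∈ K[x_1]). If D is a simple derivation, then x_2 does not belong to Im D = D(K[x_1,x_2,x_3]); that is, there is no f ∈ K[x_1,x_2,x_3] with D(f) = x_2. -/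
/-!
Read `K[x₁, x₂, x₃]` as `K[x₁][x₂][x₃]`: `D` restricts to `∂ₓ₁` on `K[x₁]` and to a derivation
`δ` of `K[x₁][x₂]`. A nonzero non-unit `g` with `g ∣ D g` generates
a proper nonzero `D`-stable ideal, so from `D F = x₂` we produce such a `g`.

If `F` has `x₃`-degree `n > 0`, comparing `x₃ⁿ`-coefficients gives `δ g = -n a₃ g` for its leading
coefficient `g ∈ K[x₁, x₂]`, which is not a constant because `a₃ ≠ 0`. Otherwise `F ∈ K[x₁, x₂]`;
its `x₂`-degree `m` is positive and its leading coefficient `c ∈ K[x₁]` satisfies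
`c' + m a₂ c = 1` if `m = 1` and `= 0` if `m ≥ 2`. Comparing degrees in `x₁` forces `a₂` to be a
constant `e`, and then `x₂ + v` with `v' + b₂ = e v` (solvable in `K[x₁]`) satisfies
`D (x₂ + v) = e (x₂ + v)`.
-/

open MvPolynomial

namespace Derivation

variable {R A : Type*} [CommRing R] [CommRing A] [Algebra R A]

def IsDarboux (d : Derivation R A A) (g : A) : Prop :=
  g ≠ 0 ∧ ¬ IsUnit g ∧ g ∣ d g

theorem IsDarboux.not_isSimple {d : Derivation R A A} {g : A} (h : d.IsDarboux g) :
    ¬ d.IsSimple := by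
  obtain ⟨hg, hgu, hdg⟩ := h
  intro hd
  have hstable : ∀ a ∈ Ideal.span {g}, d a ∈ Ideal.span {g} := by
    rintro _ ha
    obtain ⟨c, rfl⟩ := Ideal.mem_span_singleton'.mp ha
    rw [Ideal.mem_span_singleton, leibniz, smul_eq_mul, smul_eq_mul]
    exact dvd_add (dvd_mul_of_dvd_right hdg c) (dvd_mul_right g _)
  rcases hd _ hstable with h | h
  · exact hg (Ideal.span_singleton_eq_bot.mp h)
  · exact hgu (Ideal.span_singleton_eq_top.mp h)

variable {S : Type*} [CommRing S] [Algebra R S]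

def comapAlgEquiv (e : A ≃ₐ[R] S) (d : Derivation R S S) : Derivation R A A where
  toLinearMap := e.symm.toLinearMap ∘ₗ d.toLinearMap ∘ₗ e.toLinearMap
  map_one_eq_zero' := by simp
  leibniz' a b := by simp [leibniz]

@[simp]
theorem comapAlgEquiv_apply (e : A ≃ₐ[R] S) (d : Derivation R S S) (a : A) :
    d.comapAlgEquiv e a = e.symm (d (e a)) :=
  rfl

theorem IsSimple.of_comapAlgEquiv {e : A ≃ₐ[R] S} {d : Derivation R S S}
    (h : (d.comapAlgEquiv e).IsSimple) : d.IsSimple := by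
  intro I hI
  have hcomap : ∀ a ∈ I.comap e, d.comapAlgEquiv e a ∈ I.comap e := by
    intro a ha
    simpa [Ideal.mem_comap] using hI _ ha
  have hmap : (I.comap e).map e = I := Ideal.map_comap_of_surjective e e.surjective I
  rcases h _ hcomap with h | h
  · left; rw [← hmap, h, Ideal.map_bot]
  · right; rw [← hmap, h, Ideal.map_top]

end Derivation

namespace Polynomial

section Domain

variable {R : Type*} [CommRing R] [IsDomain R]

theorem degree_derivative_add_mul {c l : R[X]} (hc : c ≠ 0) (hl : l ≠ 0) :
    (derivative c + l * c).degree = l.degree + c.degree := by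
  rw [degree_add_eq_right_of_degree_lt, degree_mul]
  calc (derivative c).degree < c.degree := degree_derivative_lt hc
    _ ≤ (l * c).degree := by rw [mul_comm]; exact degree_le_mul_left c hl

theorem eq_zero_of_derivative_add_mul_eq_zero {c l : R[X]} (hc : c ≠ 0)
    (h : derivative c + l * c = 0) : l = 0 := by
  by_contra hl
  have := degree_derivative_add_mul hc hl
  rw [h, degree_zero, degree_eq_natDegree hl, degree_eq_natDegree hc] at this
  exact WithBot.bot_ne_coe this

theorem exists_eq_C_of_derivative_add_mul_eq_one {c l : R[X]}
    (h : derivative c + l * c = 1) : ∃ e : R, l = C e := by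
  have hc : c ≠ 0 := by rintro rfl; simp at h
  obtain rfl | hl := eq_or_ne l 0
  · exact ⟨0, C_0.symm⟩
  have := degree_derivative_add_mul hc hl
  rw [h, degree_one, degree_eq_natDegree hl, degree_eq_natDegree hc, ← Nat.cast_add,
    ← Nat.cast_zero, Nat.cast_inj] at this
  exact ⟨l.coeff 0, eq_C_of_natDegree_eq_zero (by omega)⟩

end Domain

section CharZero

variable {K : Type*} [Field K] [CharZero K]

theorem derivative_surjective : Function.Surjective (derivative : K[X] → K[X]) := by
  intro b
  induction b using Polynomial.induction_on' with
  | add p q hp hq =>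
    obtain ⟨P, rfl⟩ := hp
    obtain ⟨Q, rfl⟩ := hq
    exact ⟨P + Q, derivative_add⟩
  | monomial n a =>
    refine ⟨monomial (n + 1) (a / (n + 1)), ?_⟩
    rw [derivative_monomial, Nat.add_sub_cancel, Nat.cast_add_one,
      div_mul_cancel₀ a (Nat.cast_add_one_ne_zero n)]

theorem exists_derivative_add_eq_C_mul (e : K) (b : K[X]) :
    ∃ v : K[X], derivative v + b = C e * v := by
  obtain rfl | he := eq_or_ne e 0
  · obtain ⟨v, hv⟩ := derivative_surjective (-b)
    exact ⟨v, by simp [hv]⟩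
  -- `v = ∑ e⁻ʲ⁻¹ b⁽ʲ⁾`: then `e v - v'` telescopes to `b`.
  set f : ℕ → K[X] := fun j => e⁻¹ ^ j • derivative^[j] b
  refine ⟨∑ j ∈ Finset.range (b.natDegree + 1), e⁻¹ • f j, ?_⟩
  have hCe : ∀ j, C e * (e⁻¹ • f j) = f j := fun j => by
    rw [smul_eq_C_mul, ← mul_assoc, ← C_mul, mul_inv_cancel₀ he, C_1, one_mul]
  have hder : ∀ j, derivative (e⁻¹ • f j) = f (j + 1) := fun j => by
    simp only [f, derivative_smul, smul_smul, Function.iterate_succ_apply', pow_succ']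
  have hlast : f (b.natDegree + 1) = 0 := by
    simp only [f, iterate_derivative_eq_zero (Nat.lt_succ_self _), smul_zero]
  rw [derivative_sum, Finset.mul_sum]
  simp only [hCe, hder]
  rw [← eq_sub_iff_add_eq', ← Finset.sum_sub_distrib, Finset.sum_range_sub', hlast, sub_zero]
  simp [f]

end CharZero

section Extension

variable {R A : Type*} [CommRing R] [CommRing A] [Algebra R A]

noncomputable def _root_.Derivation.extendPolynomial (d : Derivation R A A) (w : A[X]) :
    Derivation R A[X] A[X] :=
  PolynomialModule.equivPolynomialSelf.toLinearMap.compDer d.mapCoeffs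
    + w • (derivative' (R := A)).restrictScalars R

variable (d : Derivation R A A) (w : A[X])

theorem _root_.Derivation.coeff_extendPolynomial (p : A[X]) (i : ℕ) :
    (d.extendPolynomial w p).coeff i = d (p.coeff i) + (w * derivative p).coeff i :=
  rfl

@[simp]
theorem _root_.Derivation.extendPolynomial_C (a : A) :
    d.extendPolynomial w (C a) = C (d a) := by
  ext i
  rw [Derivation.coeff_extendPolynomial, derivative_C, mul_zero, coeff_zero, add_zero, coeff_C,
    coeff_C]
  split_ifs <;> simp

@[simp]
theorem _root_.Derivation.extendPolynomial_X : d.extendPolynomial w X = w := by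
  ext i
  rw [Derivation.coeff_extendPolynomial, derivative_X, mul_one, coeff_X]
  split_ifs <;> simp

theorem _root_.Derivation.coeff_natDegree_extendPolynomial (a b : A) (p : A[X]) :
    (d.extendPolynomial (C a * X + C b) p).coeff p.natDegree
      = d p.leadingCoeff + p.natDegree * a * p.leadingCoeff := by
  have hb : (derivative p).coeff p.natDegree = 0 := by
    rw [coeff_derivative, coeff_eq_zero_of_natDegree_lt (Nat.lt_succ_self _), zero_mul]
  rw [Derivation.coeff_extendPolynomial, add_mul, coeff_add, mul_assoc, coeff_C_mul, coeff_C_mul,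
    hb, mul_zero, add_zero, leadingCoeff]
  congr 1
  obtain h | ⟨m, h⟩ : p.natDegree = 0 ∨ ∃ m, p.natDegree = m + 1 :=
    (Nat.eq_zero_or_eq_succ_pred _).imp_right fun h => ⟨_, h⟩
  · rw [h, coeff_X_mul_zero]; simp
  · rw [h, coeff_X_mul, coeff_derivative]; push_cast; ring

variable {d}

theorem _root_.Derivation.IsDarboux.extendPolynomial_C {g : A} (h : d.IsDarboux g) :
    (d.extendPolynomial w).IsDarboux (C g) := by
  obtain ⟨hg, hgu, hdg⟩ := h
  refine ⟨C_ne_zero.mpr hg, fun hu => hgu (isUnit_C.mp hu), ?_⟩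
  obtain ⟨c, hc⟩ := hdg
  exact ⟨C c, by rw [Derivation.extendPolynomial_C, hc, C_mul]⟩

theorem _root_.Derivation.isDarboux_X_add_C [IsDomain A] {a b v : A} (hv : d v + b = a * v) :
    (d.extendPolynomial (C a * X + C b)).IsDarboux (X + C v) := by
  refine ⟨X_add_C_ne_zero v, fun hu => ?_, Dvd.intro_left (C a) ?_⟩
  · have := natDegree_eq_zero_of_isUnit hu
    rw [natDegree_X_add_C] at this
    exact one_ne_zero this
  · rw [map_add, Derivation.extendPolynomial_X, Derivation.extendPolynomial_C, ← sub_eq_zero]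
    have : C (a * v) = C (d v) + C b := by rw [← hv, C_add]
    rw [C_mul] at this
    linear_combination this

end Extension

section Tower

variable {K : Type*} [Field K] [CharZero K]

theorem exists_eq_C_of_extendPolynomial_apply_eq_X {a b : K[X]} {q : K[X][X]}
    (hq : derivative'.extendPolynomial (C a * X + C b) q = X) : ∃ e : K, a = C e := by
  have hq0 : q ≠ 0 := by rintro rfl; exact X_ne_zero (hq.symm.trans (map_zero _))
  have hlc : q.leadingCoeff ≠ 0 := leadingCoeff_ne_zero.mpr hq0
  have hcoeff := congrArg (coeff · q.natDegree) hq
  simp only [Derivation.coeff_natDegree_extendPolynomial, derivative'_apply] at hcoeff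
  rcases (show q.natDegree = 0 ∨ q.natDegree = 1 ∨ 2 ≤ q.natDegree by omega) with h | h | h
  · rw [eq_C_of_natDegree_eq_zero h, Derivation.extendPolynomial_C] at hq
    exact absurd hq.symm (X_ne_C _)
  · rw [h, coeff_X_one, Nat.cast_one, one_mul] at hcoeff
    exact exists_eq_C_of_derivative_add_mul_eq_one hcoeff
  · rw [coeff_X_of_ne_one (by omega)] at hcoeff
    have := eq_zero_of_derivative_add_mul_eq_zero hlc hcoeff
    rw [mul_eq_zero, Nat.cast_eq_zero] at this
    exact ⟨0, by rw [C_0]; exact this.resolve_left (by omega)⟩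

theorem exists_isDarboux_of_extendPolynomial_apply_eq_X {a b : K[X]} {q : K[X][X]}
    (hq : derivative'.extendPolynomial (C a * X + C b) q = X) :
    ∃ g, (derivative'.extendPolynomial (C a * X + C b)).IsDarboux g := by
  obtain ⟨e, rfl⟩ := exists_eq_C_of_extendPolynomial_apply_eq_X hq
  obtain ⟨v, hv⟩ := exists_derivative_add_eq_C_mul e b
  exact ⟨X + C v, Derivation.isDarboux_X_add_C hv⟩

theorem exists_isDarboux_of_extendPolynomial_apply_eq_C_X {a b c : K[X]} {β : K[X][X]}
    (hc : c ≠ 0) {F : K[X][X][X]}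
    (hF : (derivative'.extendPolynomial (C a * X + C b)).extendPolynomial (C (C c) * X + C β) F
      = C X) :
    ∃ g, ((derivative'.extendPolynomial (C a * X + C b)).extendPolynomial
      (C (C c) * X + C β)).IsDarboux g := by
  set δ := derivative'.extendPolynomial (C a * X + C b)
  rcases eq_or_ne F.natDegree 0 with h | h
  · rw [eq_C_of_natDegree_eq_zero h, Derivation.extendPolynomial_C, C_inj] at hF
    obtain ⟨g, hg⟩ := exists_isDarboux_of_extendPolynomial_apply_eq_X hF
    exact ⟨C g, hg.extendPolynomial_C _⟩
  set g := F.leadingCoeff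
  have hg : g ≠ 0 := leadingCoeff_ne_zero.mpr (ne_zero_of_natDegree_gt (Nat.pos_of_ne_zero h))
  have hcoeff := congrArg (coeff · F.natDegree) hF
  simp only [Derivation.coeff_natDegree_extendPolynomial, coeff_C, if_neg h] at hcoeff
  have hδg : δ g = -(F.natDegree * C c) * g := by linear_combination hcoeff
  have hnc : (F.natDegree * C c : K[X][X]) ≠ 0 :=
    mul_ne_zero (Nat.cast_ne_zero.mpr h) (C_ne_zero.mpr hc)
  refine ⟨C g, Derivation.IsDarboux.extendPolynomial_C _
    ⟨hg, fun hu => ?_, Dvd.intro_left _ hδg.symm⟩⟩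
  obtain ⟨r, hr, hrg⟩ := isUnit_iff.mp hu
  obtain ⟨k, -, rfl⟩ := isUnit_iff.mp hr
  have : δ g = 0 := by simp [δ, ← hrg]
  rw [this, eq_comm, mul_eq_zero, neg_eq_zero] at hδg
  exact hδg.elim hnc hg

end Tower

end Polynomial

namespace MvPolynomial

open scoped Polynomial

theorem mem_supported_of_degreeOf_eq_zero {σ R : Type*} [CommSemiring R] {s : Set σ} {i : σ}
    {p : MvPolynomial σ R} (hp : p ∈ supported R (insert i s)) (hi : degreeOf i p = 0) :
    p ∈ supported R s := by
  rw [mem_supported] at hp ⊢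
  intro j hj
  refine (hp hj).resolve_left ?_
  rintro rfl
  exact mem_vars_iff_degreeOf_ne_zero.mp hj hi

theorem apply_mem_of_mem_supported {σ R B : Type*} [CommSemiring R] [Semiring B]
    [Algebra R B] (φ : MvPolynomial σ R →ₐ[R] B) {S : Subalgebra R B} {s : Set σ}
    (hs : ∀ i ∈ s, φ (X i) ∈ S) {p : MvPolynomial σ R} (hp : p ∈ supported R s) : φ p ∈ S :=
  Algebra.adjoin_le (S := S.comap φ) (by rintro _ ⟨i, hi, rfl⟩; exact hs i hi) hp

variable (K : Type*) [CommRing K]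

noncomputable def trivariateEquiv : MvPolynomial (Fin 3) K ≃ₐ[K] K[X][X][X] :=
  (renameEquiv K Fin.revPerm).trans <| (finSuccEquiv K 2).trans <| Polynomial.mapAlgEquiv <|
    (finSuccEquiv K 1).trans <| Polynomial.mapAlgEquiv <| (finSuccEquiv K 0).trans <|
      Polynomial.mapAlgEquiv <| isEmptyAlgEquiv K (Fin 0)

@[simp]
theorem trivariateEquiv_X_zero :
    trivariateEquiv K (X 0) = Polynomial.C (Polynomial.C Polynomial.X) := by
  simp only [trivariateEquiv, AlgEquiv.trans_apply, renameEquiv_apply, rename_X, Fin.revPerm_apply,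
    Polynomial.coe_mapAlgEquiv]
  rw [show Fin.rev (0 : Fin 3) = Fin.succ 1 from rfl, finSuccEquiv_X_succ, Polynomial.map_C]
  simp only [RingHom.coe_coe, AlgEquiv.trans_apply]
  rw [show (1 : Fin 2) = Fin.succ 0 from rfl, finSuccEquiv_X_succ]
  simp [finSuccEquiv_X_zero]

@[simp]
theorem trivariateEquiv_X_one : trivariateEquiv K (X 1) = Polynomial.C Polynomial.X := by
  simp only [trivariateEquiv, AlgEquiv.trans_apply, renameEquiv_apply, rename_X, Fin.revPerm_apply,
    Polynomial.coe_mapAlgEquiv]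
  rw [show Fin.rev (1 : Fin 3) = Fin.succ 0 from rfl, finSuccEquiv_X_succ]
  simp [finSuccEquiv_X_zero]

@[simp]
theorem trivariateEquiv_X_two : trivariateEquiv K (X 2) = Polynomial.X := by
  simp [trivariateEquiv, finSuccEquiv_X_zero]

variable {K}

theorem exists_trivariateEquiv_eq_C_C {p : MvPolynomial (Fin 3) K}
    (hp : p ∈ supported K {0}) :
    ∃ a : K[X], trivariateEquiv K p = Polynomial.C (Polynomial.C a) := by
  have := apply_mem_of_mem_supported (trivariateEquiv K).toAlgHom
    (S := (Polynomial.CAlgHom.comp Polynomial.CAlgHom).range)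
    (by rintro i rfl; exact ⟨Polynomial.X, by simp⟩) hp
  obtain ⟨a, ha⟩ := (AlgHom.mem_range _).mp this
  exact ⟨a, ha.symm⟩

theorem exists_trivariateEquiv_eq_C {p : MvPolynomial (Fin 3) K}
    (hp : p ∈ supported K {0, 1}) : ∃ a : K[X][X], trivariateEquiv K p = Polynomial.C a := by
  have := apply_mem_of_mem_supported (trivariateEquiv K).toAlgHom (S := Polynomial.CAlgHom.range)
    (by
      rintro i (rfl | rfl)
      · exact ⟨Polynomial.C Polynomial.X, by simp⟩
      · exact ⟨Polynomial.X, by simp⟩) hp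
  obtain ⟨a, ha⟩ := (AlgHom.mem_range _).mp this
  exact ⟨a, ha.symm⟩

end MvPolynomial

/-- For `D = ∂_{x₁} + (a₂ x₂ + b₂) ∂_{x₂} + (a₃ x₃ + b₃) ∂_{x₃}` with
`a₂, b₂ ∈ K[x₁]`, `a₃, b₃ ∈ K[x₁, x₂]`, `a₃ ≠ 0` and `deg_{x₂} a₃ = 0`:
if `D` is simple, then `x₂ ∉ Im D`. -/
theorem statement17 (K : Type*) [Field K] [CharZero K]
    (a2 b2 a3 b3 : MvPolynomial (Fin 3) K)
    (ha2 : a2 ∈ supported K ({0} : Set (Fin 3)))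
    (hb2 : b2 ∈ supported K ({0} : Set (Fin 3)))
    (ha3 : a3 ∈ supported K ({0, 1} : Set (Fin 3)))
    (hb3 : b3 ∈ supported K ({0, 1} : Set (Fin 3)))
    (ha3ne : a3 ≠ 0)
    (ha3deg : degreeOf (1 : Fin 3) a3 = 0)
    (D : Derivation K (MvPolynomial (Fin 3) K) (MvPolynomial (Fin 3) K))
    (hD1 : D (X 0) = 1)
    (hD2 : D (X 1) = a2 * X 1 + b2)
    (hD3 : D (X 2) = a3 * X 2 + b3)
    (hD : Derivation.IsSimple D) :
    ¬ ∃ f : MvPolynomial (Fin 3) K, D f = X 1 := by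
  rintro ⟨f, hf⟩
  obtain ⟨α₂, hα₂⟩ := exists_trivariateEquiv_eq_C_C ha2
  obtain ⟨β₂, hβ₂⟩ := exists_trivariateEquiv_eq_C_C hb2
  obtain ⟨γ, hγ⟩ := exists_trivariateEquiv_eq_C_C
    (mem_supported_of_degreeOf_eq_zero (Set.pair_comm (0 : Fin 3) 1 ▸ ha3) ha3deg)
  obtain ⟨β₃, hβ₃⟩ := exists_trivariateEquiv_eq_C hb3
  have hγ0 : γ ≠ 0 := by
    rintro rfl
    exact ha3ne ((trivariateEquiv K).injective (by simp [hγ]))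
  set d := (Polynomial.derivative'.extendPolynomial
    (Polynomial.C α₂ * Polynomial.X + Polynomial.C β₂)).extendPolynomial
      (Polynomial.C (Polynomial.C γ) * Polynomial.X + Polynomial.C β₃)
  have hDd : D = d.comapAlgEquiv (trivariateEquiv K) := by
    refine MvPolynomial.derivation_ext fun i => ?_
    rw [Derivation.comapAlgEquiv_apply, AlgEquiv.eq_symm_apply]
    fin_cases i <;> simp [d, hD1, hD2, hD3, hα₂, hβ₂, hγ, hβ₃]
  have hdf : d (trivariateEquiv K f) = Polynomial.C Polynomial.X := by
    simpa [hDd] using congrArg (trivariateEquiv K) hf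
  obtain ⟨g, hg⟩ := Polynomial.exists_isDarboux_of_extendPolynomial_apply_eq_C_X hγ0 hdf
  exact hg.not_isSimple (hDd ▸ hD).of_comapAlgEquiv
end
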